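/- With A, O, M, •_i as above: for 1 ≤ i ≤ j - p, f ∈ O(p), g ∈ O(q), x ∈ M(n): f •_i (g •_j x) = g •_{j-p+1} (f •_i x). Together with the other cases, M is a unital comp module over O. -/
import Mathlib


open Function

section
variable {k : Type*} [CommRing k] {A : Type*} [AddCommGroup A] [Module k A]

/-- Partial composition in the endomorphism-type operad of Hochschild cochains of a
hom-associative algebra: `(f ∘_i g)` for `f` of arity `p`, `g` of arity `q`,
in 1-indexed position `i`.  Tuples are encoded as sequences `ℕ → A`. -/
def oComp (α : A → A) (q i : ℕ) (f g : (ℕ → A) → A) : (ℕ → A) → A := fun a =>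
  f fun j => if j + 1 < i then α^[q - 1] (a j)
    else if j + 1 = i then g (fun l => a (j + l))
    else α^[q - 1] (a (j + q - 1))

/-- The comp module action `f •_i x` of a `p`-cochain on a Hochschild chain
`x = a_0 ⊗ a_1 ⋯ a_n` (encoded as a sequence `ℕ → A`). -/
def mBul (α : A → A) (p i : ℕ) (f : (ℕ → A) → A) (x : ℕ → A) : ℕ → A := fun j =>
  if j < i then α^[p - 1] (x j)
  else if j = i then f (fun l => x (i + l))
  else α^[p - 1] (x (j + p - 1))

/-- The cyclic operator `t(a_0 ⊗ a_1 ⋯ a_n) = a_n ⊗ a_0 a_1 ⋯ a_{n-1}` on `M(n)`. -/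
def cyc (n : ℕ) (x : ℕ → A) : ℕ → A := fun j => if j = 0 then x n else x (j - 1)

/-- `f` is a Hochschild `p`-cochain of the hom-associative algebra `(A, μ, α)`:
it depends only on the first `p` arguments, is `k`-multilinear in them, and
satisfies `α ∘ f = f ∘ α^{⊗p}`. -/
structure InO (k : Type*) [CommRing k] {A : Type*} [AddCommGroup A] [Module k A]
    (α : A → A) (p : ℕ) (f : (ℕ → A) → A) : Prop where
  dep : ∀ a b : ℕ → A, (∀ j < p, a j = b j) → f a = f b
  equivar : ∀ a : ℕ → A, α (f a) = f fun j => α (a j)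
  map_add : ∀ (a : ℕ → A) (j : ℕ) (x y : A), j < p →
    f (Function.update a j (x + y)) = f (Function.update a j x) + f (Function.update a j y)
  map_smul : ∀ (a : ℕ → A) (j : ℕ) (c : k) (x : A), j < p →
    f (Function.update a j (c • x)) = c • f (Function.update a j x)

lemma mBul_lt {α : A → A} {p i m : ℕ} {f : (ℕ → A) → A} {x : ℕ → A} (h : m < i) :
    mBul α p i f x m = α^[p - 1] (x m) := if_pos h

lemma mBul_self {α : A → A} {p i : ℕ} {f : (ℕ → A) → A} {x : ℕ → A} :
    mBul α p i f x i = f (fun l => x (i + l)) := by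
  simp [mBul]

lemma mBul_gt {α : A → A} {p i m : ℕ} {f : (ℕ → A) → A} {x : ℕ → A} (h : i < m) :
    mBul α p i f x m = α^[p - 1] (x (m + p - 1)) := by
  rw [mBul, if_neg (by omega), if_neg (by omega)]

lemma iter_equivar {α : A → A} {f : (ℕ → A) → A}
    (h : ∀ a : ℕ → A, α (f a) = f fun j => α (a j)) (m : ℕ) (a : ℕ → A) :
    α^[m] (f a) = f fun j => α^[m] (a j) := by
  induction m generalizing a with
  | zero => simp
  | succ m ih =>
      rw [Function.iterate_succ_apply', ih, h]
      simp only [← Function.iterate_succ_apply' α m]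

lemma iter_comm (α : A → A) (a b : ℕ) (x : A) : α^[a] (α^[b] x) = α^[b] (α^[a] x) := by
  rw [← Function.iterate_add_apply, ← Function.iterate_add_apply, Nat.add_comm]

/-- third comp-module identity for the Hochschild chains of a
multiplicative hom-associative algebra:
`f •_i (g •_j x) = g •_{j-p+1} (f •_i x)` for `1 ≤ i ≤ j - p`;
together with the unitality `id_A •_i x = x` this makes `M` a unital comp module. -/
theorem comp_module_commuting_and_unital (μ : A →ₗ[k] A →ₗ[k] A) (α : A →ₗ[k] A)
    (hassoc : ∀ a b c : A, μ (μ a b) (α c) = μ (α a) (μ b c))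
    (hmult : ∀ a b : A, α (μ a b) = μ (α a) (α b))
    (p q i j n : ℕ) (f g : (ℕ → A) → A)
    (hf : InO k (⇑α) p f) (hg : InO k (⇑α) q g)
    (hp : 1 ≤ p) (hq : 1 ≤ q)
    (hi1 : 1 ≤ i) (hij : i + p ≤ j) (hjq : j + q ≤ n + 1) :
    (∀ x : ℕ → A,
      mBul (⇑α) p i f (mBul (⇑α) q j g x) = mBul (⇑α) q (j - p + 1) g (mBul (⇑α) p i f x)) ∧
    (∀ (i' : ℕ) (y : ℕ → A), 1 ≤ i' → mBul (A := A) (⇑α) 1 i' (fun a => a 0) y = y) := by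
  constructor
  · intro x
    funext m
    have hpj : p < j := by omega
    rcases lt_trichotomy m i with h1 | h1 | h1
    · -- m < i
      rw [mBul_lt h1, mBul_lt (show m < j by omega),
        mBul_lt (show m < j - p + 1 by omega), mBul_lt h1, iter_comm]
    · -- m = i
      subst h1
      rw [mBul_self, mBul_lt (show m < j - p + 1 by omega), mBul_self,
        iter_equivar hf.equivar]
      exact hf.dep _ _ (fun l hl => mBul_lt (show m + l < j by omega))
    · rcases lt_trichotomy m (j - p + 1) with h2 | h2 | h2
      · -- i < m < j - p + 1
        rw [mBul_gt h1, mBul_lt (show m + p - 1 < j by omega),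
          mBul_lt h2, mBul_gt h1, iter_comm]
      · -- m = j - p + 1
        subst h2
        rw [mBul_gt h1, show j - p + 1 + p - 1 = j by omega, mBul_self,
          iter_equivar hg.equivar, mBul_self]
        refine congrArg g (funext fun l => ?_)
        rw [mBul_gt (show i < j - p + 1 + l by omega),
          show j - p + 1 + l + p - 1 = j + l by omega]
      · -- m > j - p + 1
        rw [mBul_gt h1, mBul_gt (show j < m + p - 1 by omega),
          mBul_gt h2, mBul_gt (show i < m + q - 1 by omega), iter_comm,
          show m + p - 1 + q - 1 = m + q - 1 + p - 1 by omega]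
  · intro i' y hi'
    funext m
    rcases lt_trichotomy m i' with h1 | h1 | h1
    · rw [mBul_lt h1]; simp
    · subst h1; rw [mBul_self]; simp
    · rw [mBul_gt h1]; simp

end
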